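/- arXiv:math/0211053 — 2 statements merged into one kernel-verified Lean document; each statement's English description precedes it below -/
import Mathlib

section
/- Let (t, x) be a B-valued 1-cocycle on the base tetrahedron: for all 0 ≤ i < j ≤ 3 we have t_ij ∈ ℂ*, x_ij ∈ ℂ, and for all i < j < k the relations t_ik = t_ij · t_jk and x_ik = t_ij · x_jk + x_ij / t_jk hold. Then x_01 · x_23 + x_12 · x_03 − x_02 · x_13 = 0; that is, setting p_0 = x_01·x_23, p_1 = x_12·x_03, p_2 = −x_02·x_13, one has p_0 + p_1 + p_2 = 0. -/
/-- For a B-valued 1-cocycle `(t,x)` on the base tetrahedron one has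
`x 0 1 * x 2 3 + x 1 2 * x 0 3 - x 0 2 * x 1 3 = 0`. -/
theorem cocycle_opposite_edge_relation
    (t x : Fin 4 → Fin 4 → ℂ)
    (ht : ∀ i j : Fin 4, i < j → t i j ≠ 0)
    (hcoc_t : ∀ i j k : Fin 4, i < j → j < k → t i k = t i j * t j k)
    (hcoc_x : ∀ i j k : Fin 4, i < j → j < k → x i k = t i j * x j k + x i j / t j k) :
    x 0 1 * x 2 3 + x 1 2 * x 0 3 - x 0 2 * x 1 3 = 0 := by
  have h01 : (0:Fin 4) < 1 := by decide
  have h12 : (1:Fin 4) < 2 := by decide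
  have h23 : (2:Fin 4) < 3 := by decide
  have ht01 := ht 0 1 h01
  have ht12 := ht 1 2 h12
  have ht23 := ht 2 3 h23
  have hx012 := hcoc_x 0 1 2 h01 h12
  have hx013 := hcoc_x 0 1 3 h01 (by decide)
  have hx023 := hcoc_x 0 2 3 (by decide) h23
  have hx123 := hcoc_x 1 2 3 h12 h23
  have ht013 := hcoc_t 0 1 3 h01 (by decide)
  have ht123 := hcoc_t 1 2 3 h12 h23
  rw [hx013, ht123] at *
  rw [hx123, hx012]
  field_simp
  ring
end

section
/- Let (t, x) be a full B-valued 1-cocycle on the base tetrahedron: for all 0 ≤ i < j ≤ 3, t_ij ∈ ℂ*, x_ij ∈ ℂ with x_ij ≠ 0 (fullness), and for all i < j < k the relations t_ik = t_ij·t_jk and x_ik = t_ij·x_jk + x_ij/t_jk hold. Set p_0 = x_01·x_23, p_1 = x_12·x_03, p_2 = −x_02·x_13 and w_i = −p_{i+1}/p_{i+2} (indices mod 3). Then each p_i is nonzero, each w_i is different from 0 and 1, and (w_0, w_1, w_2) is a modular triple: w_0·w_1·w_2 = −1 and w_0·w_1 − w_1 = −1. (This is the well-definedness of the idealization map F sending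 D-decorated tetrahedra to I-decorated tetrahedra.) -/
/-- Well-definedness of the idealization map `F`: a full B-valued
1-cocycle on the base tetrahedron yields nonzero `p i`'s and a modular triple
`(w 0, w 1, w 2)`. -/
theorem idealization_well_defined
    (t x : Fin 4 → Fin 4 → ℂ)
    (ht : ∀ i j : Fin 4, i < j → t i j ≠ 0)
    (hfull : ∀ i j : Fin 4, i < j → x i j ≠ 0)
    (hcoc_t : ∀ i j k : Fin 4, i < j → j < k → t i k = t i j * t j k)
    (hcoc_x : ∀ i j k : Fin 4, i < j → j < k → x i k = t i j * x j k + x i j / t j k)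
    (p : Fin 3 → ℂ)
    (hp0 : p 0 = x 0 1 * x 2 3) (hp1 : p 1 = x 1 2 * x 0 3)
    (hp2 : p 2 = -(x 0 2 * x 1 3))
    (w : Fin 3 → ℂ) (hw : ∀ i : Fin 3, w i = -p (i + 1) / p (i + 2)) :
    (∀ i : Fin 3, p i ≠ 0) ∧ (∀ i : Fin 3, w i ≠ 0 ∧ w i ≠ 1) ∧
      w 0 * w 1 * w 2 = -1 ∧ w 0 * w 1 - w 1 = -1 := by
  have ht01 := ht 0 1 (by decide)
  have ht12 := ht 1 2 (by decide)
  have ht23 := ht 2 3 (by decide)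
  have ht13 := ht 1 3 (by decide)
  have hx01 := hfull 0 1 (by decide)
  have hx12 := hfull 1 2 (by decide)
  have hx23 := hfull 2 3 (by decide)
  have hx02 := hfull 0 2 (by decide)
  have hx13 := hfull 1 3 (by decide)
  have hx03 := hfull 0 3 (by decide)
  have hX02 := hcoc_x 0 1 2 (by decide) (by decide)
  have hX13 := hcoc_x 1 2 3 (by decide) (by decide)
  have hX03 := hcoc_x 0 1 3 (by decide) (by decide)
  have hT13 := hcoc_t 1 2 3 (by decide) (by decide)
  -- key identity: p 0 + p 1 + p 2 = 0
  have hsum : p 0 + p 1 + p 2 = 0 := by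
    rw [hp0, hp1, hp2, hX03, hX13, hX02, hT13]
    field_simp
    ring
  have hP0 : p 0 ≠ 0 := by rw [hp0]; exact mul_ne_zero hx01 hx23
  have hP1 : p 1 ≠ 0 := by rw [hp1]; exact mul_ne_zero hx12 hx03
  have hP2 : p 2 ≠ 0 := by
    rw [hp2]; exact neg_ne_zero.mpr (mul_ne_zero hx02 hx13)
  have hpne : ∀ i : Fin 3, p i ≠ 0 := by
    intro i; fin_cases i <;> assumption
  have hw0 : w 0 = -p 1 / p 2 := hw 0
  have hw1 : w 1 = -p 2 / p 0 := hw 1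
  have hw2 : w 2 = -p 0 / p 1 := hw 2
  have hs : ∀ i : Fin 3, p i + p (i + 1) + p (i + 2) = 0 := by
    intro i
    fin_cases i
    · show p 0 + p 1 + p 2 = 0; exact hsum
    · show p 1 + p 2 + p 0 = 0; linear_combination hsum
    · show p 2 + p 0 + p 1 = 0; linear_combination hsum
  refine ⟨hpne, ?_, ?_, ?_⟩
  · intro i
    have h1 : w i = -p (i + 1) / p (i + 2) := hw i
    constructor
    · rw [h1]
      exact div_ne_zero (neg_ne_zero.mpr (hpne _)) (hpne _)
    · rw [h1]
      intro hcontra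
      rw [div_eq_one_iff_eq (hpne (i + 2))] at hcontra
      exact hpne i (by linear_combination hs i + hcontra)
  · rw [hw0, hw1, hw2]; field_simp
  · rw [hw0, hw1]
    field_simp
    linear_combination hsum
end
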